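/- For the Mermin scenario with odd β (rows β = 0, columns β = 1), the maximal closed noncontextual subsets Ω ⊆ M are exactly of two types: (type 1) the 6 sets of three pairwise anticommuting measurements (no two in a common context), each admitting 2^3 = 8 outcome assignments; (type 2) the 9 sets Ω = C ∪ C' which are unions of a row and a column intersecting in a single measurement (5 elements each), each admitting 8 outcome assignments. Hence there are 48 pairs (Ω, s) of type 1 and 72 pairs of type 2. -/
import Mathlib

set_option maxRecDepth 100000
set_option maxHeartbeats 4000000

/-- The six contexts of the Mermin scenario: rows (inl) and columns (inr). -/
def ctx : Fin 3 ⊕ Fin 3 → Finset (Fin 3 × Fin 3)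
  | Sum.inl i => {(i, 0), (i, 1), (i, 2)}
  | Sum.inr j => {(0, j), (1, j), (2, j)}

/-- The odd β: value 0 on rows, 1 on columns. -/
def betaOdd : Fin 3 ⊕ Fin 3 → ZMod 2
  | Sum.inl _ => 0
  | Sum.inr _ => 1

/-- Ω is closed: any context meeting Ω in at least two elements is contained in Ω. -/
def IsClosedSet (Ω : Finset (Fin 3 × Fin 3)) : Prop :=
  ∀ c, 2 ≤ (ctx c ∩ Ω).card → ctx c ⊆ Ω

/-- `s` is an outcome assignment on Ω (for β = betaOdd): for every context contained in
Ω, the values of `s` sum to β of the context. -/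
def IsAssignment (Ω : Finset (Fin 3 × Fin 3)) (s : Fin 3 × Fin 3 → ZMod 2) : Prop :=
  ∀ c, ctx c ⊆ Ω → ∑ m ∈ ctx c, s m = betaOdd c

/-- Ω is closed noncontextual (cnc). -/
def IsCnc (Ω : Finset (Fin 3 × Fin 3)) : Prop :=
  IsClosedSet Ω ∧ ∃ s, IsAssignment Ω s

/-- Ω is a maximal cnc set. -/
def IsMaxCnc (Ω : Finset (Fin 3 × Fin 3)) : Prop :=
  IsCnc Ω ∧ ∀ Ω', IsCnc Ω' → Ω ⊆ Ω' → Ω' = Ω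

/-- Type 1: three measurements, no two in a common context. -/
def IsType1 (Ω : Finset (Fin 3 × Fin 3)) : Prop :=
  Ω.card = 3 ∧ ∀ c, (ctx c ∩ Ω).card ≤ 1

/-- Type 2: the union of a row and a column (intersecting in a single measurement). -/
def IsType2 (Ω : Finset (Fin 3 × Fin 3)) : Prop :=
  ∃ i j : Fin 3, Ω = ctx (Sum.inl i) ∪ ctx (Sum.inr j)

/- ### Auxiliary material -/

instance : DecidablePred IsClosedSet := fun Ω => by unfold IsClosedSet; infer_instance
instance (Ω) : DecidablePred (IsAssignment Ω) := fun s => by unfold IsAssignment; infer_instance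
instance : DecidablePred IsType1 := fun Ω => by unfold IsType1; infer_instance
instance : DecidablePred IsType2 := fun Ω => by unfold IsType2; infer_instance

/-- Explicit list of type-1 sets: the six permutation matrices. -/
def T1 : Finset (Finset (Fin 3 × Fin 3)) :=
  { {(0,0),(1,1),(2,2)}, {(0,0),(1,2),(2,1)}, {(0,1),(1,0),(2,2)},
    {(0,1),(1,2),(2,0)}, {(0,2),(1,0),(2,1)}, {(0,2),(1,1),(2,0)} }

/-- Explicit list of type-2 sets: the nine row∪column unions. -/
def T2 : Finset (Finset (Fin 3 × Fin 3)) :=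
  Finset.image (fun p : Fin 3 × Fin 3 => ctx (Sum.inl p.1) ∪ ctx (Sum.inr p.2)) Finset.univ

/-- Assignments on Ω vanishing outside Ω. -/
def F (Ω : Finset (Fin 3 × Fin 3)) : Finset (Fin 3 × Fin 3 → ZMod 2) :=
  Finset.univ.filter fun s => IsAssignment Ω s ∧ ∀ m ∉ Ω, s m = 0

lemma d1 : ∀ Ω, IsType1 Ω ↔ Ω ∈ T1 := by decide

lemma d2 : ∀ Ω, IsType2 Ω ↔ Ω ∈ T2 := by decide

lemma d3 : ∀ s : Fin 3 × Fin 3 → ZMod 2, ¬ IsAssignment Finset.univ s := by decide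

/-- One closure step: add every context meeting X at least twice. -/
def step (X : Finset (Fin 3 × Fin 3)) : Finset (Fin 3 × Fin 3) :=
  X ∪ Finset.univ.biUnion (fun c => if 2 ≤ (ctx c ∩ X).card then ctx c else ∅)

lemma step_subset {X Ω' : Finset (Fin 3 × Fin 3)} (hc : IsClosedSet Ω') (h : X ⊆ Ω') :
    step X ⊆ Ω' := by
  unfold step
  refine Finset.union_subset h ?_
  intro x hx
  simp only [Finset.mem_biUnion, Finset.mem_univ, true_and] at hx
  obtain ⟨c, hc'⟩ := hx
  by_cases h2 : 2 ≤ (ctx c ∩ X).card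
  · rw [if_pos h2] at hc'
    exact hc c (le_trans h2 (Finset.card_le_card
      (Finset.inter_subset_inter (Finset.Subset.refl _) h))) hc'
  · rw [if_neg h2] at hc'
    exact absurd hc' (Finset.notMem_empty x)

lemma d4' : ∀ Ω ∈ T1 ∪ T2, ∀ m ∉ Ω,
    step (step (step (insert m Ω))) = Finset.univ := by decide

lemma d4 : ∀ Ω', (IsClosedSet Ω' ∧ Ω' ≠ Finset.univ) →
    ∀ Ω ∈ T1 ∪ T2, Ω ⊆ Ω' → Ω' = Ω := by
  rintro Ω' ⟨hc, hne⟩ Ω hΩ hsub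
  by_contra hO
  have hex : ∃ m ∈ Ω', m ∉ Ω := by
    by_contra h
    push_neg at h
    exact hO (Finset.Subset.antisymm h hsub)
  obtain ⟨m, hm1, hm2⟩ := hex
  have h1 : insert m Ω ⊆ Ω' := Finset.insert_subset hm1 hsub
  have h3 := step_subset hc (step_subset hc (step_subset hc h1))
  rw [d4' Ω hΩ m hm2] at h3
  exact hne (Finset.Subset.antisymm (Finset.subset_univ _) h3)

lemma d5 : ∀ Ω, (IsClosedSet Ω ∧ Ω ≠ Finset.univ) → ∃ Ω' ∈ T1 ∪ T2, Ω ⊆ Ω' := by decide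

lemma d6 : ∀ Ω ∈ T1 ∪ T2, IsClosedSet Ω ∧ Ω ≠ Finset.univ := by decide

lemma hF : ∀ Ω ∈ T1 ∪ T2, (F Ω).card = 8 := by decide

lemma cardT1 : T1.card = 6 := by decide
lemma cardT2 : T2.card = 9 := by decide

lemma mono {Ω Ω' s} (h : Ω ⊆ Ω') (hs : IsAssignment Ω' s) : IsAssignment Ω s :=
  fun c hc => hs c (hc.trans h)

lemma exists_assign {Ω} (h : Ω ∈ T1 ∪ T2) : ∃ s, IsAssignment Ω s := by
  have h8 := hF Ω h
  have hne : (F Ω).Nonempty := by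
    rw [← Finset.card_pos, h8]; norm_num
  obtain ⟨s, hs⟩ := hne
  exact ⟨s, (Finset.mem_filter.mp hs).2.1⟩

lemma cnc_iff (Ω) : IsCnc Ω ↔ (IsClosedSet Ω ∧ Ω ≠ Finset.univ) := by
  constructor
  · rintro ⟨hc, s, hs⟩
    refine ⟨hc, ?_⟩
    rintro rfl
    exact d3 s hs
  · rintro ⟨hc, hne⟩
    obtain ⟨Ω', hΩ', hsub⟩ := d5 Ω ⟨hc, hne⟩
    obtain ⟨s, hs⟩ := exists_assign hΩ'
    exact ⟨hc, s, mono hsub hs⟩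

lemma main_iff (Ω) : IsMaxCnc Ω ↔ (IsType1 Ω ∨ IsType2 Ω) := by
  constructor
  · rintro ⟨hcnc, hmax⟩
    have hP := (cnc_iff Ω).mp hcnc
    obtain ⟨Ω', hΩ', hsub⟩ := d5 Ω hP
    have hcnc' : IsCnc Ω' := (cnc_iff Ω').mpr (d6 Ω' hΩ')
    have heq : Ω' = Ω := hmax Ω' hcnc' hsub
    rcases Finset.mem_union.mp (heq ▸ hΩ') with h | h
    · exact Or.inl ((d1 Ω).mpr h)
    · exact Or.inr ((d2 Ω).mpr h)
  · intro h
    have hmem : Ω ∈ T1 ∪ T2 := by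
      rcases h with h | h
      · exact Finset.mem_union_left _ ((d1 Ω).mp h)
      · exact Finset.mem_union_right _ ((d2 Ω).mp h)
    refine ⟨(cnc_iff Ω).mpr (d6 Ω hmem), fun Ω' hΩ' hsub => ?_⟩
    exact d4 Ω' ((cnc_iff Ω').mp hΩ') Ω hmem hsub

/-- The pairs finset for a collection of good sets. -/
def Pairs (T : Finset (Finset (Fin 3 × Fin 3))) :
    Finset (Finset (Fin 3 × Fin 3) × (Fin 3 × Fin 3 → ZMod 2)) :=
  T.biUnion fun Ω => (F Ω).image fun s => (Ω, s)

lemma pairs_card {T : Finset (Finset (Fin 3 × Fin 3))} (hT : T ⊆ T1 ∪ T2) :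
    (Pairs T).card = T.card * 8 := by
  have hdisj : ∀ Ω ∈ T, ∀ Ω' ∈ T, Ω ≠ Ω' →
      Disjoint ((F Ω).image fun s => (Ω, s)) ((F Ω').image fun s => (Ω', s)) := by
    intro Ω _ Ω' _ hne
    simp only [Finset.disjoint_left, Finset.mem_image]
    rintro p ⟨s, _, rfl⟩ ⟨s', _, h⟩
    exact hne ((Prod.mk.injEq _ _ _ _).mp h).1.symm
  rw [Pairs, Finset.card_biUnion hdisj]
  have h8 : ∀ Ω ∈ T, ((F Ω).image fun s => (Ω, s)).card = 8 := fun Ω hΩ => by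
    rw [Finset.card_image_of_injective _ (fun a b h => ((Prod.mk.injEq _ _ _ _).mp h).2)]
    exact hF Ω (hT hΩ)
  rw [Finset.sum_congr rfl h8, Finset.sum_const, smul_eq_mul]

lemma mem_F {Ω s} : s ∈ F Ω ↔ (IsAssignment Ω s ∧ ∀ m ∉ Ω, s m = 0) := by
  simp [F]

lemma mem_pairs {T p} : p ∈ Pairs T ↔ p.1 ∈ T ∧ p.2 ∈ F p.1 := by
  obtain ⟨Ω, s⟩ := p
  simp only [Pairs, Finset.mem_biUnion, Finset.mem_image]
  constructor
  · rintro ⟨Ω', hΩ', s', hs', h⟩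
    obtain ⟨rfl, rfl⟩ := Prod.mk.injEq .. |>.mp h
    exact ⟨hΩ', hs'⟩
  · rintro ⟨h1, h2⟩
    exact ⟨Ω, h1, s, h2, rfl⟩

/-- For the Mermin scenario with odd β, the maximal cnc sets are exactly
those of type 1 (6 of them) and type 2 (9 of them); each admits exactly 8 outcome
assignments, whence 48 pairs (Ω,s) of type 1 and 72 of type 2. -/
theorem stmt13 :
    (∀ Ω, IsMaxCnc Ω ↔ (IsType1 Ω ∨ IsType2 Ω)) ∧
    Set.ncard {Ω | IsMaxCnc Ω ∧ IsType1 Ω} = 6 ∧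
    Set.ncard {Ω | IsMaxCnc Ω ∧ IsType2 Ω} = 9 ∧
    (∀ Ω, IsMaxCnc Ω →
      Set.ncard {s : Fin 3 × Fin 3 → ZMod 2 |
        IsAssignment Ω s ∧ ∀ m ∉ Ω, s m = 0} = 8) ∧
    Set.ncard {p : Finset (Fin 3 × Fin 3) × (Fin 3 × Fin 3 → ZMod 2) |
        IsMaxCnc p.1 ∧ IsType1 p.1 ∧ IsAssignment p.1 p.2 ∧
          ∀ m ∉ p.1, p.2 m = 0} = 48 ∧
    Set.ncard {p : Finset (Fin 3 × Fin 3) × (Fin 3 × Fin 3 → ZMod 2) |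
        IsMaxCnc p.1 ∧ IsType2 p.1 ∧ IsAssignment p.1 p.2 ∧
          ∀ m ∉ p.1, p.2 m = 0} = 72 := by
  have key1 : ∀ Ω, IsMaxCnc Ω ∧ IsType1 Ω ↔ Ω ∈ T1 := by
    intro Ω
    constructor
    · rintro ⟨_, h⟩; exact (d1 Ω).mp h
    · intro h
      exact ⟨(main_iff Ω).mpr (Or.inl ((d1 Ω).mpr h)), (d1 Ω).mpr h⟩
  have key2 : ∀ Ω, IsMaxCnc Ω ∧ IsType2 Ω ↔ Ω ∈ T2 := by
    intro Ω
    constructor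
    · rintro ⟨_, h⟩; exact (d2 Ω).mp h
    · intro h
      exact ⟨(main_iff Ω).mpr (Or.inr ((d2 Ω).mpr h)), (d2 Ω).mpr h⟩
  refine ⟨main_iff, ?_, ?_, ?_, ?_, ?_⟩
  · have : {Ω | IsMaxCnc Ω ∧ IsType1 Ω} = ↑T1 := by
      ext Ω; simpa using key1 Ω
    rw [this, Set.ncard_coe_finset, cardT1]
  · have : {Ω | IsMaxCnc Ω ∧ IsType2 Ω} = ↑T2 := by
      ext Ω; simpa using key2 Ω
    rw [this, Set.ncard_coe_finset, cardT2]
  · intro Ω hΩ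
    have hmem : Ω ∈ T1 ∪ T2 := by
      rcases (main_iff Ω).mp hΩ with h | h
      · exact Finset.mem_union_left _ ((d1 Ω).mp h)
      · exact Finset.mem_union_right _ ((d2 Ω).mp h)
    have : {s : Fin 3 × Fin 3 → ZMod 2 |
        IsAssignment Ω s ∧ ∀ m ∉ Ω, s m = 0} = ↑(F Ω) := by
      ext s; simpa using mem_F.symm
    rw [this, Set.ncard_coe_finset, hF Ω hmem]
  · have : {p : Finset (Fin 3 × Fin 3) × (Fin 3 × Fin 3 → ZMod 2) |
        IsMaxCnc p.1 ∧ IsType1 p.1 ∧ IsAssignment p.1 p.2 ∧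
          ∀ m ∉ p.1, p.2 m = 0} = ↑(Pairs T1) := by
      ext p
      simp only [Set.mem_setOf_eq, Finset.coe_sort_coe, Finset.mem_coe, mem_pairs, mem_F]
      constructor
      · rintro ⟨h1, h2, h3⟩; exact ⟨(key1 p.1).mp ⟨h1, h2⟩, h3⟩
      · rintro ⟨h1, h2⟩
        obtain ⟨a, b⟩ := (key1 p.1).mpr h1
        exact ⟨a, b, h2⟩
    rw [this, Set.ncard_coe_finset, pairs_card Finset.subset_union_left, cardT1]
  · have : {p : Finset (Fin 3 × Fin 3) × (Fin 3 × Fin 3 → ZMod 2) |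
        IsMaxCnc p.1 ∧ IsType2 p.1 ∧ IsAssignment p.1 p.2 ∧
          ∀ m ∉ p.1, p.2 m = 0} = ↑(Pairs T2) := by
      ext p
      simp only [Set.mem_setOf_eq, Finset.coe_sort_coe, Finset.mem_coe, mem_pairs, mem_F]
      constructor
      · rintro ⟨h1, h2, h3⟩; exact ⟨(key2 p.1).mp ⟨h1, h2⟩, h3⟩
      · rintro ⟨h1, h2⟩
        obtain ⟨a, b⟩ := (key2 p.1).mpr h1
        exact ⟨a, b, h2⟩
    rw [this, Set.ncard_coe_finset, pairs_card Finset.subset_union_right, cardT2]
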